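/- For m ≥ 5, let H = K_{m,m} \ E(C_{2m}) and W a resolving set of H. It is impossible for W to simultaneously have a gap containing exactly three vertices and a gap containing exactly four vertices. -/

import Mathlib

/-! Same-side vertices of `H` are at distance 2 (for `m ≥ 5` they have a common neighbour), and
opposite-side vertices are at distance 1 unless they are consecutive on the cycle. So two same-side
vertices that lie, together with their cycle-neighbours, outside `W` have the same distance to every
vertex of `W`, and must coincide. The middle vertex of the 3-gap and the middle vertex of the 4-gap
on the same side form such a pair; identifying them puts an endpoint of the 3-gap strictly inside
the 4-gap. -/

/-- `W` resolves `G`: every vertex is determined by its distance vector to `W`. -/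
def Resolves {V : Type*} (G : SimpleGraph V) (W : Set V) : Prop :=
  ∀ u v : V, (∀ w ∈ W, G.dist u w = G.dist v w) → u = v

/-- Metric dimension: minimum cardinality of a (finite) resolving set. -/
noncomputable def metricDim {V : Type*} (G : SimpleGraph V) : ℕ :=
  sInf {k | ∃ W : Set V, W.Finite ∧ W.ncard = k ∧ Resolves G W}
/-- `K_{m,m}` minus the Hamiltonian cycle `x₁ y₁ x₂ y₂ … x_m y_m x₁` (0-indexed:
cycle edges are `xᵢ yᵢ` and `yᵢ x_{i+1 mod m}`). -/
def cycGraph (m : ℕ) : SimpleGraph (Fin m ⊕ Fin m) where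
  Adj u v := match u, v with
    | Sum.inl i, Sum.inr j => j ≠ i ∧ (i : ℕ) ≠ ((j : ℕ) + 1) % m
    | Sum.inr j, Sum.inl i => j ≠ i ∧ (i : ℕ) ≠ ((j : ℕ) + 1) % m
    | _, _ => False
  symm := ⟨by rintro (i|i) (j|j) h <;> exact h⟩
  loopless := ⟨by rintro (i|i) h <;> exact h⟩

/-- Position `k` (taken mod `2m`) along the Hamiltonian cycle
`x₁ y₁ x₂ y₂ …`: even positions `2i ↦ xᵢ`, odd positions `2i+1 ↦ yᵢ`. -/
def cyc (m : ℕ) [NeZero m] (k : ℕ) : Fin m ⊕ Fin m :=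
  if (k % (2 * m)) % 2 = 0 then
    Sum.inl ⟨k % (2 * m) / 2, by
      have hm : 0 < m := Nat.pos_of_ne_zero (NeZero.ne m)
      have h : k % (2 * m) < 2 * m := Nat.mod_lt _ (by omega)
      exact Nat.div_lt_of_lt_mul (by omega)⟩
  else
    Sum.inr ⟨k % (2 * m) / 2, by
      have hm : 0 < m := Nat.pos_of_ne_zero (NeZero.ne m)
      have h : k % (2 * m) < 2 * m := Nat.mod_lt _ (by omega)
      exact Nat.div_lt_of_lt_mul (by omega)⟩

/-- `W` has a gap of exactly `L` vertices starting at cycle position `s`: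
the positions `s` and `s+L+1` are in `W` and the `L` positions strictly between are not. -/
def IsGap (m : ℕ) [NeZero m] (W : Set (Fin m ⊕ Fin m)) (s L : ℕ) : Prop :=
  cyc m s ∈ W ∧ cyc m (s + L + 1) ∈ W ∧ ∀ t, 1 ≤ t → t ≤ L → cyc m (s + t) ∉ W

section

variable {m : ℕ}

lemma exists_isLeft_eq_notMem (b : Bool) {s : Finset (Fin m ⊕ Fin m)} (hs : s.card < m) :
    ∃ w, w.isLeft = b ∧ w ∉ s := by
  let side : Fin m ↪ Fin m ⊕ Fin m := if b then .inl else .inr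
  have hcard : s.card < (Finset.univ.map side).card := by
    rwa [Finset.card_map, Finset.card_univ, Fintype.card_fin]
  obtain ⟨w, hw, hws⟩ := Finset.exists_mem_notMem_of_card_lt_card hcard
  obtain ⟨i, -, rfl⟩ := Finset.mem_map.mp hw
  exact ⟨side i, by cases b <;> rfl, hws⟩

variable [NeZero m]

def cycSucc : Fin m ⊕ Fin m → Fin m ⊕ Fin m
  | .inl i => .inr i
  | .inr i => .inl (i + 1)

def cycPred : Fin m ⊕ Fin m → Fin m ⊕ Fin m
  | .inl i => .inr (i - 1)
  | .inr i => .inl i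

lemma cycPred_cycSucc (u : Fin m ⊕ Fin m) : cycPred (cycSucc u) = u := by
  cases u <;> simp [cycSucc, cycPred]

lemma cycSucc_injective : Function.Injective (cycSucc (m := m)) :=
  Function.LeftInverse.injective cycPred_cycSucc

lemma isLeft_cycSucc (u : Fin m ⊕ Fin m) : (cycSucc u).isLeft = !u.isLeft := by
  cases u <;> rfl

lemma cyc_succ (k : ℕ) : cyc m (k + 1) = cycSucc (cyc m k) := by
  obtain ⟨n, rfl⟩ : ∃ n, m = n + 1 := Nat.exists_eq_succ_of_ne_zero (NeZero.ne m)
  have hk : k % (2 * (n + 1)) < 2 * (n + 1) := Nat.mod_lt _ (by omega)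
  have hk1 := Nat.add_mod_eq_ite (m := k) (n := 1) (k := 2 * (n + 1))
  rw [Nat.mod_eq_of_lt (show 1 < 2 * (n + 1) by omega)] at hk1
  unfold cyc
  split_ifs with h₁ h₂ h₂ <;>
    simp only [cycSucc, reduceCtorEq, Sum.inl.injEq, Sum.inr.injEq, Fin.ext_iff, Fin.val_add_one,
      Fin.val_last] <;>
    split_ifs at hk1 ⊢ <;> omega

lemma cyc_add (k n : ℕ) : cyc m (k + n) = cycSucc^[n] (cyc m k) := by
  induction n with
  | zero => rfl
  | succ n ih => rw [← add_assoc, cyc_succ, ih, Function.iterate_succ_apply']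

lemma cycGraph_adj_iff (u v : Fin m ⊕ Fin m) :
    (cycGraph m).Adj u v ↔ u.isLeft ≠ v.isLeft ∧ v ≠ cycSucc u ∧ u ≠ cycSucc v := by
  cases u <;> cases v <;>
    simp [cycGraph, cycSucc, Fin.ext_iff, Fin.val_add, and_comm]

lemma cycGraph_adj_of_isLeft_ne {u w : Fin m ⊕ Fin m} (hside : u.isLeft ≠ w.isLeft)
    (hsucc : w ≠ cycSucc u) (hpred : w ≠ cycPred u) : (cycGraph m).Adj u w :=
  (cycGraph_adj_iff u w).mpr ⟨hside, hsucc, fun h => hpred (h ▸ (cycPred_cycSucc w).symm)⟩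

lemma cycGraph_dist_of_isLeft_eq (hm : 5 ≤ m) {u v : Fin m ⊕ Fin m}
    (hside : u.isLeft = v.isLeft) (huv : u ≠ v) : (cycGraph m).dist u v = 2 := by
  obtain ⟨w, hw, hws⟩ := exists_isLeft_eq_notMem (!u.isLeft)
    (s := {cycSucc u, cycSucc v, cycPred u, cycPred v}) (Finset.card_le_four.trans_lt hm)
  simp only [Finset.mem_insert, Finset.mem_singleton, not_or] at hws
  have hwu : u.isLeft ≠ w.isLeft := by rw [hw]; exact (Bool.not_ne_self _).symm
  have hcommon : w ∈ (cycGraph m).commonNeighbors u v :=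
    ⟨cycGraph_adj_of_isLeft_ne hwu hws.1 hws.2.2.1,
      cycGraph_adj_of_isLeft_ne (hside ▸ hwu) hws.2.1 hws.2.2.2⟩
  have hnadj : ¬(cycGraph m).Adj u v := fun h => ((cycGraph_adj_iff u v).mp h).1 hside
  rw [SimpleGraph.dist, SimpleGraph.edist_eq_two_iff.mpr ⟨huv, hnadj, w, hcommon⟩]
  rfl

lemma cycGraph_dist_eq_ite (hm : 5 ≤ m) {u w : Fin m ⊕ Fin m} (hu : w ≠ u)
    (hpred : w ≠ cycPred u) (hsucc : w ≠ cycSucc u) :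
    (cycGraph m).dist u w = if u.isLeft = w.isLeft then 2 else 1 := by
  split_ifs with hside
  · exact cycGraph_dist_of_isLeft_eq hm hside hu.symm
  · exact SimpleGraph.dist_eq_one_iff_adj.mpr (cycGraph_adj_of_isLeft_ne hside hsucc hpred)

lemma eq_of_resolves_cycGraph (hm : 5 ≤ m) {W : Set (Fin m ⊕ Fin m)}
    (hW : Resolves (cycGraph m) W) {u v : Fin m ⊕ Fin m} (hside : u.isLeft = v.isLeft)
    (hu : cycPred u ∉ W ∧ u ∉ W ∧ cycSucc u ∉ W)
    (hv : cycPred v ∉ W ∧ v ∉ W ∧ cycSucc v ∉ W) : u = v := by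
  refine hW u v fun w hw => ?_
  have hne : ∀ x, x ∉ W → w ≠ x := fun x hx h => hx (h ▸ hw)
  rw [cycGraph_dist_eq_ite hm (hne u hu.2.1) (hne _ hu.1) (hne _ hu.2.2),
    cycGraph_dist_eq_ite hm (hne v hv.2.1) (hne _ hv.1) (hne _ hv.2.2), hside]

lemma IsGap.nbhd_notMem {W : Set (Fin m ⊕ Fin m)} {s L : ℕ} (h : IsGap m W s L) {t : ℕ}
    (ht : 1 ≤ t) (htL : t + 2 ≤ L) :
    cycPred (cyc m (s + t + 1)) ∉ W ∧ cyc m (s + t + 1) ∉ W ∧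
      cycSucc (cyc m (s + t + 1)) ∉ W := by
  rw [cyc_succ, cycPred_cycSucc, ← cyc_succ, ← cyc_succ]
  exact ⟨h.2.2 t ht (by omega), h.2.2 (t + 1) (by omega) (by omega),
    h.2.2 (t + 2) (by omega) htL⟩

end

/-- for `m ≥ 5`, a resolving set of `K_{m,m} \ E(C_{2m})` cannot
simultaneously have a gap of exactly three vertices and a gap of exactly four
vertices. -/
theorem stmt10 (m : ℕ) [NeZero m] (hm : 5 ≤ m) (W : Set (Fin m ⊕ Fin m))
    (hW : Resolves (cycGraph m) W) :
    ¬ ∃ s₁ s₂ : ℕ, IsGap m W s₁ 3 ∧ IsGap m W s₂ 4 := by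
  rintro ⟨s₁, s₂, h₃, h₄⟩
  have hmid₃ := h₃.nbhd_notMem le_rfl le_rfl
  by_cases hside : (cyc m (s₁ + 1 + 1)).isLeft = (cyc m (s₂ + 1 + 1)).isLeft
  · have heq := eq_of_resolves_cycGraph hm hW hside hmid₃ (h₄.nbhd_notMem le_rfl (by norm_num))
    have hend : cyc m (s₁ + 1 + 1 + 2) = cyc m (s₂ + 1 + 1 + 2) := by
      rw [cyc_add (s₁ + 1 + 1), cyc_add (s₂ + 1 + 1), heq]
    exact h₄.2.2 4 (by norm_num) le_rfl (hend ▸ (h₃.2.1 : cyc m (s₁ + 1 + 1 + 2) ∈ W))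
  · have hside' : (cyc m (s₁ + 1 + 1)).isLeft = (cyc m (s₂ + 1 + 1 + 1)).isLeft := by
      rw [cyc_succ (s₂ + 1 + 1), isLeft_cycSucc]
      exact Bool.eq_not.mpr hside
    have heq := eq_of_resolves_cycGraph hm hW hside' hmid₃ (h₄.nbhd_notMem (by norm_num) le_rfl)
    have hstart : cyc m s₁ = cyc m (s₂ + 1) :=
      cycSucc_injective.iterate 2 (by rw [← cyc_add, ← cyc_add]; exact heq)
    exact h₄.2.2 1 le_rfl (by norm_num) (hstart ▸ h₃.1)
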